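/- arXiv:1705.07276 — 4 statements merged into one kernel-verified Lean document; each statement's English description precedes it below -/
import Mathlib

section
/- Let D be a line of PG(5,K) (a 2-dimensional subspace of V) such that the set E_D of planes that contain D and are external to H₅ is nonempty. Let f be any function assigning to each point v of D (each 1-dimensional subspace v ≤ D) a plane f(v) ∈ E_D (so D ≤ f(v) and f(v) is external to H₅). Then the set H := { X : X is a line and v ≤ X ≤ f(v) for some point v of D }, i.e. the union of the pencils L[v, f(v)] over all points v of D, is a pencilled hfd line set. -/
/-!
If `x` is a singular point and `ε` an external plane with `ε ≤ x^⊥`, then `x` lies in every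
totally singular plane `T`: since `T ∩ ε = 0`, we can write `x = t + e` with `t ∈ T`, `e ∈ ε`,
and `B(x, e) = 0` gives `Q(x) = -Q(e)`, so `e = 0`. As the totally singular planes
`x₁ = x₃ = x₅ = 0` and `x₀ = x₂ = x₄ = 0` meet only in `0`, this is impossible, so every tangent
hyperplane `x^⊥` meets each plane `f(v)` in a line. If `D ≤ x^⊥`, that line is `D` for every `v`;
otherwise `x^⊥` meets `D` in a single point `v`, and `f(v) ∩ x^⊥` is the only member of the
union of pencils lying in `x^⊥`.
-/

/-- The Klein quadratic form on `K^6`. -/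
def kleinQ {K : Type*} [Field K] (x : Fin 6 → K) : K :=
  x 0 * x 1 + x 2 * x 3 + x 4 * x 5

/-- The polar bilinear form `B(x,y) = Q(x+y) - Q(x) - Q(y)`. -/
def kleinB {K : Type*} [Field K] (x y : Fin 6 → K) : K :=
  kleinQ (x + y) - kleinQ x - kleinQ y

/-- The polar subspace `π₅(S)` of a subspace `S`. -/
def kleinPolar {K : Type*} [Field K] (S : Submodule K (Fin 6 → K)) :
    Submodule K (Fin 6 → K) where
  carrier := {y | ∀ s ∈ S, kleinB s y = 0}
  add_mem' := by
    intro a b ha hb s hs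
    have h1 := ha s hs
    have h2 := hb s hs
    simp only [kleinB, kleinQ, Pi.add_apply] at *
    linear_combination h1 + h2
  zero_mem' := by
    intro s hs
    simp [kleinB, kleinQ]
  smul_mem' := by
    intro c a ha s hs
    have h1 := ha s hs
    simp only [kleinB, kleinQ, Pi.add_apply, Pi.smul_apply, smul_eq_mul] at *
    linear_combination c * h1

/-- `τ` is a tangent hyperplane of the Klein quadric. -/
def IsTangentHyperplane {K : Type*} [Field K] (τ : Submodule K (Fin 6 → K)) : Prop :=
  ∃ x : Fin 6 → K, x ≠ 0 ∧ kleinQ x = 0 ∧ τ = kleinPolar (Submodule.span K {x})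

/-- A subspace is external to the Klein quadric. -/
def IsExternal {K : Type*} [Field K] (S : Submodule K (Fin 6 → K)) : Prop :=
  ∀ s ∈ S, s ≠ 0 → kleinQ s ≠ 0

/-- A `0`-secant of the Klein quadric: an external line. -/
def IsSecant {K : Type*} [Field K] (G : Submodule K (Fin 6 → K)) : Prop :=
  Module.finrank K G = 2 ∧ IsExternal G

/-- The pencil of lines with vertex `v` and carrier plane `κ`. -/
def pencil {K : Type*} [Field K] (v κ : Submodule K (Fin 6 → K)) :
    Set (Submodule K (Fin 6 → K)) :=
  {X | Module.finrank K X = 2 ∧ v ≤ X ∧ X ≤ κ}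

/-- An hfd line set: a set of `0`-secants such that every tangent hyperplane
contains exactly one member. -/
def IsHfd {K : Type*} [Field K] (H : Set (Submodule K (Fin 6 → K))) : Prop :=
  (∀ G ∈ H, IsSecant G) ∧
    ∀ τ : Submodule K (Fin 6 → K), IsTangentHyperplane τ → ∃! G, G ∈ H ∧ G ≤ τ

/-- A pencilled hfd line set: every member lies in a pencil entirely contained in `H`. -/
def IsPencilledHfd {K : Type*} [Field K] (H : Set (Submodule K (Fin 6 → K))) : Prop :=
  IsHfd H ∧
    ∀ G ∈ H, ∃ v κ : Submodule K (Fin 6 → K), Module.finrank K v = 1 ∧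
      Module.finrank K κ = 3 ∧ v ≤ κ ∧ pencil v κ ⊆ H ∧ G ∈ pencil v κ

/-- `v` is a vertex of the pencilled hfd line set `H`. -/
def IsVertex {K : Type*} [Field K] (H : Set (Submodule K (Fin 6 → K)))
    (v : Submodule K (Fin 6 → K)) : Prop :=
  Module.finrank K v = 1 ∧ ∃ κ : Submodule K (Fin 6 → K),
    Module.finrank K κ = 3 ∧ v ≤ κ ∧ pencil v κ ⊆ H

/-- `κ` is a carrier plane of the pencilled hfd line set `H`. -/
def IsCarrier {K : Type*} [Field K] (H : Set (Submodule K (Fin 6 → K)))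
    (κ : Submodule K (Fin 6 → K)) : Prop :=
  Module.finrank K κ = 3 ∧ ∃ v : Submodule K (Fin 6 → K),
    Module.finrank K v = 1 ∧ v ≤ κ ∧ pencil v κ ⊆ H

open Module

section Hyperplane

variable {K V : Type*} [Field K] [AddCommGroup V] [Module K V]

theorem Submodule.finrank_le_finrank_inf_ker_add_one (S : Submodule K V) [FiniteDimensional K S]
    (φ : V →ₗ[K] K) : finrank K S ≤ finrank K ↥(S ⊓ LinearMap.ker φ) + 1 := by
  have hrank := LinearMap.finrank_range_add_finrank_ker (φ.domRestrict S)
  have hrange : finrank K (LinearMap.range (φ.domRestrict S)) ≤ 1 :=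
    (Submodule.finrank_le _).trans (finrank_self K).le
  have hker : finrank K (LinearMap.ker (φ.domRestrict S)) = finrank K ↥(S ⊓ LinearMap.ker φ) := by
    rw [LinearMap.ker_domRestrict, ← Submodule.map_comap_subtype,
      Submodule.finrank_map_subtype_eq]
  omega

theorem Submodule.finrank_inf_ker_add_one {P : Submodule K V} [FiniteDimensional K P]
    {φ : V →ₗ[K] K} (hP : ¬ P ≤ LinearMap.ker φ) :
    finrank K ↥(P ⊓ LinearMap.ker φ) + 1 = finrank K P := by
  have hlt := Submodule.finrank_lt_finrank_of_lt (inf_lt_left.mpr hP)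
  have hle := P.finrank_le_finrank_inf_ker_add_one φ
  omega

theorem Submodule.eq_inf_ker_of_le {X P : Submodule K V} [FiniteDimensional K P]
    {φ : V →ₗ[K] K} (hP : ¬ P ≤ LinearMap.ker φ) (hXP : X ≤ P) (hXφ : X ≤ LinearMap.ker φ)
    (hdim : finrank K P = finrank K X + 1) : X = P ⊓ LinearMap.ker φ :=
  Submodule.eq_of_le_of_finrank_le (le_inf hXP hXφ) (by
    have := Submodule.finrank_inf_ker_add_one hP
    omega)

end Hyperplane

namespace QuadraticMap

theorem mem_of_polar_eq_zero_of_sup_eq_top {R M N : Type*} [CommRing R] [AddCommGroup M]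
    [AddCommGroup N] [Module R M] [Module R N] (Q : QuadraticMap R M N)
    {T ε : Submodule R M} (hT : ∀ t ∈ T, Q t = 0) (hε : ∀ e ∈ ε, Q e = 0 → e = 0)
    (hTε : T ⊔ ε = ⊤) {x : M} (hx : Q x = 0) (hxε : ∀ e ∈ ε, polar Q x e = 0) : x ∈ T := by
  obtain ⟨t, ht, e, he, rfl⟩ := Submodule.mem_sup.mp (hTε ▸ Submodule.mem_top : x ∈ T ⊔ ε)
  have hpolar : polar Q t e + 2 • Q e = 0 := by
    rw [← polar_self, ← polar_add_left]; exact hxε e he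
  have hQ : Q t + Q e + polar Q t e = 0 := by rw [← QuadraticMap.map_add]; exact hx
  have hQe : Q e = 0 := by
    rw [hT t ht, zero_add] at hQ
    rw [two_nsmul] at hpolar
    calc Q e = (polar Q t e + (Q e + Q e)) - (Q e + polar Q t e) := by abel
      _ = 0 := by rw [hpolar, hQ, sub_zero]
  rw [hε e he hQe, add_zero]
  exact ht

theorem sup_eq_top_of_finrank_le {K V N : Type*} [Field K] [AddCommGroup V] [Module K V]
    [AddCommGroup N] [Module K N] [FiniteDimensional K V] (Q : QuadraticMap K V N)
    {T ε : Submodule K V}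
    (hT : ∀ t ∈ T, Q t = 0) (hε : ∀ e ∈ ε, Q e = 0 → e = 0)
    (hdim : finrank K V ≤ finrank K T + finrank K ε) : T ⊔ ε = ⊤ := by
  have hdisj : T ⊓ ε = ⊥ :=
    (Submodule.eq_bot_iff _).mpr fun y hy => hε y hy.2 (hT y hy.1)
  have hsum := Submodule.finrank_sup_add_finrank_inf_eq T ε
  rw [hdisj, finrank_bot] at hsum
  exact Submodule.eq_top_of_finrank_eq (le_antisymm (Submodule.finrank_le _) (by omega))

end QuadraticMap

section Klein

variable {K : Type*} [Field K]

def kleinForm : QuadraticForm K (Fin 6 → K) :=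
  QuadraticMap.ofPolar kleinQ
    (fun a x => by simp only [kleinQ, Pi.smul_apply, smul_eq_mul]; ring)
    (fun x x' y => by simp only [QuadraticMap.polar, kleinQ, Pi.add_apply]; ring)
    (fun a x y => by
      simp only [QuadraticMap.polar, kleinQ, Pi.add_apply, Pi.smul_apply, smul_eq_mul]; ring)

theorem kleinPolar_span_singleton (x : Fin 6 → K) :
    kleinPolar (Submodule.span K {x}) = LinearMap.ker (kleinForm.polarBilin x) := by
  ext y
  refine ⟨fun h => h x (Submodule.mem_span_singleton_self x), fun h s hs => ?_⟩
  obtain ⟨c, rfl⟩ := Submodule.mem_span_singleton.mp hs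
  change QuadraticMap.polar kleinForm (c • x) y = 0
  rw [QuadraticMap.polar_smul_left, ← QuadraticMap.polarBilin_apply_apply, h, smul_zero]

/-- The subspace of vectors vanishing at the coordinates in the range of `s`. -/
def coordVanishing (s : Fin 3 → Fin 6) : Submodule K (Fin 6 → K) :=
  LinearMap.ker (LinearMap.funLeft K K s)

theorem finrank_coordVanishing {s : Fin 3 → Fin 6} (hs : Function.Injective s) :
    finrank K (coordVanishing (K := K) s) = 3 := by
  have hrank := LinearMap.finrank_range_add_finrank_ker (LinearMap.funLeft K K s)
  rw [LinearMap.range_eq_top.mpr (LinearMap.funLeft_surjective_of_injective K K s hs),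
    finrank_top, finrank_fin_fun, finrank_fin_fun] at hrank
  rw [coordVanishing]
  omega

theorem mem_coordVanishing {s : Fin 3 → Fin 6} {x : Fin 6 → K} :
    x ∈ coordVanishing s ↔ ∀ i, x (s i) = 0 := by
  simp only [coordVanishing, LinearMap.mem_ker, funext_iff, LinearMap.funLeft_apply,
    Pi.zero_apply]

theorem IsExternal.mem_of_le_ker_polarBilin {ε : Submodule K (Fin 6 → K)} (hε : IsExternal ε)
    (hε3 : finrank K ε = 3) {x : Fin 6 → K} (hQx : kleinQ x = 0)
    (hle : ε ≤ LinearMap.ker (kleinForm.polarBilin x)) {T : Submodule K (Fin 6 → K)}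
    (hT3 : finrank K T = 3) (hT : ∀ t ∈ T, kleinQ t = 0) : x ∈ T := by
  have hanis : ∀ e ∈ ε, kleinForm e = 0 → e = 0 := fun e he hQe => by
    by_contra he0
    exact hε e he he0 hQe
  have hTε : T ⊔ ε = ⊤ :=
    kleinForm.sup_eq_top_of_finrank_le hT hanis (by rw [hT3, hε3, finrank_fin_fun])
  exact (kleinForm (K := K)).mem_of_polar_eq_zero_of_sup_eq_top hT hanis hTε hQx
    fun e he => LinearMap.mem_ker.mp (hle he)

theorem IsExternal.not_le_ker_polarBilin {ε : Submodule K (Fin 6 → K)} (hε : IsExternal ε)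
    (hε3 : finrank K ε = 3) {x : Fin 6 → K} (hx : x ≠ 0) (hQx : kleinQ x = 0) :
    ¬ ε ≤ LinearMap.ker (kleinForm.polarBilin x) := by
  intro hle
  have hodd : ∀ i, x (![1, 3, 5] i) = 0 := mem_coordVanishing.mp <|
    hε.mem_of_le_ker_polarBilin hε3 hQx hle (finrank_coordVanishing (by decide)) fun y hy => by
      have h := mem_coordVanishing.mp hy
      have h1 : y 1 = 0 := h 0
      have h3 : y 3 = 0 := h 1
      have h5 : y 5 = 0 := h 2
      simp [kleinQ, h1, h3, h5]
  have heven : ∀ i, x (![0, 2, 4] i) = 0 := mem_coordVanishing.mp <|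
    hε.mem_of_le_ker_polarBilin hε3 hQx hle (finrank_coordVanishing (by decide)) fun y hy => by
      have h := mem_coordVanishing.mp hy
      have h0 : y 0 = 0 := h 0
      have h2 : y 2 = 0 := h 1
      have h4 : y 4 = 0 := h 2
      simp [kleinQ, h0, h2, h4]
  refine hx (funext fun i => ?_)
  fin_cases i
  exacts [heven 0, hodd 0, heven 1, hodd 1, heven 2, hodd 2]

end Klein

section Construction

variable {K : Type*} [Field K]

def pencilUnion (D : Submodule K (Fin 6 → K))
    (f : Submodule K (Fin 6 → K) → Submodule K (Fin 6 → K)) : Set (Submodule K (Fin 6 → K)) :=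
  {X | ∃ v : Submodule K (Fin 6 → K), finrank K v = 1 ∧ v ≤ D ∧ X ∈ pencil v (f v)}

variable {D : Submodule K (Fin 6 → K)} {f : Submodule K (Fin 6 → K) → Submodule K (Fin 6 → K)}
  {φ : (Fin 6 → K) →ₗ[K] K}

theorem inf_ker_eq_inf_ker_of_le_ker (hD : finrank K D = 2)
    (hf : ∀ v : Submodule K (Fin 6 → K), finrank K v = 1 → v ≤ D →
      finrank K (f v) = 3 ∧ D ≤ f v ∧ ¬ f v ≤ LinearMap.ker φ)
    {u v : Submodule K (Fin 6 → K)} (hu : finrank K u = 1) (huD : u ≤ D)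
    (huφ : u ≤ LinearMap.ker φ) (hv : finrank K v = 1) (hvD : v ≤ D)
    (hvφ : v ≤ LinearMap.ker φ) : f u ⊓ LinearMap.ker φ = f v ⊓ LinearMap.ker φ := by
  obtain ⟨hu3, hDu, huφ'⟩ := hf u hu huD
  obtain ⟨hv3, hDv, hvφ'⟩ := hf v hv hvD
  by_cases hDφ : D ≤ LinearMap.ker φ
  · rw [← Submodule.eq_inf_ker_of_le huφ' hDu hDφ (by omega),
      ← Submodule.eq_inf_ker_of_le hvφ' hDv hDφ (by omega)]
  · rw [(Submodule.eq_inf_ker_of_le hDφ huD huφ (by omega)).trans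
      (Submodule.eq_inf_ker_of_le hDφ hvD hvφ (by omega)).symm]

theorem existsUnique_mem_pencilUnion_le_ker (hD : finrank K D = 2)
    (hf : ∀ v : Submodule K (Fin 6 → K), finrank K v = 1 → v ≤ D →
      finrank K (f v) = 3 ∧ D ≤ f v ∧ ¬ f v ≤ LinearMap.ker φ) :
    ∃! G, G ∈ pencilUnion D f ∧ G ≤ LinearMap.ker φ := by
  have hDφ : D ⊓ LinearMap.ker φ ≠ ⊥ := by
    rw [← Submodule.one_le_finrank_iff]
    have := D.finrank_le_finrank_inf_ker_add_one φ
    omega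
  obtain ⟨d, ⟨hdD, hdφ⟩, hd0⟩ := Submodule.exists_mem_ne_zero_of_ne_bot hDφ
  have hv : finrank K (K ∙ d) = 1 := finrank_span_singleton hd0
  have hvD : (K ∙ d) ≤ D := (Submodule.span_singleton_le_iff_mem d D).mpr hdD
  have hvφ : (K ∙ d) ≤ LinearMap.ker φ := (Submodule.span_singleton_le_iff_mem _ _).mpr hdφ
  obtain ⟨hv3, hDv, hvφ'⟩ := hf _ hv hvD
  refine ⟨f (K ∙ d) ⊓ LinearMap.ker φ,
    ⟨⟨K ∙ d, hv, hvD, ?_, le_inf (hvD.trans hDv) hvφ, inf_le_left⟩, inf_le_right⟩, ?_⟩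
  · have := Submodule.finrank_inf_ker_add_one hvφ'
    omega
  rintro X ⟨⟨u, hu, huD, hX2, huX, hXf⟩, hXφ⟩
  obtain ⟨hu3, -, huφ'⟩ := hf u hu huD
  rw [Submodule.eq_inf_ker_of_le huφ' hXf hXφ (by omega)]
  exact inf_ker_eq_inf_ker_of_le_ker hD hf hu huD (huX.trans hXφ) hv hvD hvφ

end Construction

theorem construction_pencilled_hfd_general {K : Type*} [Field K]
    (D : Submodule K (Fin 6 → K)) (hD : Module.finrank K D = 2)
    (f : Submodule K (Fin 6 → K) → Submodule K (Fin 6 → K))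
    (hf : ∀ v : Submodule K (Fin 6 → K), Module.finrank K v = 1 → v ≤ D →
      Module.finrank K (f v) = 3 ∧ D ≤ f v ∧ IsExternal (f v)) :
    IsPencilledHfd {X : Submodule K (Fin 6 → K) |
      ∃ v : Submodule K (Fin 6 → K),
        Module.finrank K v = 1 ∧ v ≤ D ∧ X ∈ pencil v (f v)} := by
  change IsPencilledHfd (pencilUnion D f)
  refine ⟨⟨?_, ?_⟩, ?_⟩
  · rintro G ⟨v, hv, hvD, hG2, -, hGf⟩
    exact ⟨hG2, fun s hs => (hf v hv hvD).2.2 s (hGf hs)⟩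
  · rintro τ ⟨x, hx, hQx, rfl⟩
    rw [kleinPolar_span_singleton]
    refine existsUnique_mem_pencilUnion_le_ker hD fun v hv hvD => ?_
    obtain ⟨hv3, hDv, hext⟩ := hf v hv hvD
    exact ⟨hv3, hDv, hext.not_le_ker_polarBilin hv3 hx hQx⟩
  · rintro G ⟨v, hv, hvD, hG⟩
    obtain ⟨hv3, hDv, -⟩ := hf v hv hvD
    exact ⟨v, f v, hv, hv3, hvD.trans hDv, fun X hX => ⟨v, hv, hvD, hX⟩, hG⟩

/-- Theorem: construction of pencilled hfd line sets.
If `D` is a line such that the set `E_D` of external planes through `D` is nonempty,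
and `f` assigns to every point `v` of `D` an external plane `f v` through `D`,
then the union of the pencils `L[v, f v]` over the points `v` of `D` is a
pencilled hfd line set. -/
theorem construction_pencilled_hfd {K : Type*} [Field K]
    (D : Submodule K (Fin 6 → K)) (hD : Module.finrank K D = 2)
    (hED : ∃ ε : Submodule K (Fin 6 → K),
      Module.finrank K ε = 3 ∧ D ≤ ε ∧ IsExternal ε)
    (f : Submodule K (Fin 6 → K) → Submodule K (Fin 6 → K))
    (hf : ∀ v : Submodule K (Fin 6 → K), Module.finrank K v = 1 → v ≤ D →
      Module.finrank K (f v) = 3 ∧ D ≤ f v ∧ IsExternal (f v)) :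
    IsPencilledHfd {X : Submodule K (Fin 6 → K) |
      ∃ v : Submodule K (Fin 6 → K),
        Module.finrank K v = 1 ∧ v ≤ D ∧ X ∈ pencil v (f v)} :=
  construction_pencilled_hfd_general D hD f hf
end

section
/- Let H be a pencilled hfd line set in PG(5,K). Then every carrier plane of H is external to the Klein quadric H₅, that is, if v is a point, κ a plane with v ≤ κ, and the pencil L[v,κ] is entirely contained in H, then Q(s) ≠ 0 for every nonzero s ∈ κ. -/
/-! Every point of the carrier plane `κ` lies on a line of the pencil `L[v,κ]`: join it to `v`,
or, if it lies in `v`, take any line of the pencil. These lines belong to `H`, hence are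
`0`-secants, so no point of `κ` lies on the quadric. -/

theorem IsHfd.isExternal_of_mem {K : Type*} [Field K] {H : Set (Submodule K (Fin 6 → K))}
    (hH : IsHfd H) {G : Submodule K (Fin 6 → K)} (hG : G ∈ H) : IsExternal G :=
  (hH.1 G hG).2

section Pencil

variable {K : Type*} [Field K] {v κ : Submodule K (Fin 6 → K)}

theorem sup_span_singleton_mem_pencil (hv : Module.finrank K v = 1) (hvκ : v ≤ κ)
    {w : Fin 6 → K} (hwκ : w ∈ κ) (hwv : w ∉ v) :
    v ⊔ Submodule.span K {w} ∈ pencil v κ :=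
  ⟨by rw [Submodule.finrank_sup_span_singleton hwv, hv], le_sup_left,
    sup_le hvκ ((Submodule.span_singleton_le_iff_mem w κ).2 hwκ)⟩

theorem exists_mem_pencil_of_lt (hv : Module.finrank K v = 1) (hvκ : v < κ)
    {s : Fin 6 → K} (hs : s ∈ κ) : ∃ X ∈ pencil v κ, s ∈ X := by
  by_cases hsv : s ∈ v
  · obtain ⟨w, hwκ, hwv⟩ := SetLike.exists_of_lt hvκ
    exact ⟨_, sup_span_singleton_mem_pencil hv hvκ.le hwκ hwv, Submodule.mem_sup_left hsv⟩
  · exact ⟨_, sup_span_singleton_mem_pencil hv hvκ.le hs hsv,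
      Submodule.mem_sup_right (Submodule.mem_span_singleton_self s)⟩

end Pencil

/-- Main Theorem, part (a).
Every carrier plane of a pencilled hfd line set is external to the Klein quadric. -/
theorem carrier_plane_external {K : Type*} [Field K]
    (H : Set (Submodule K (Fin 6 → K))) (hH : IsPencilledHfd H)
    (v κ : Submodule K (Fin 6 → K))
    (hv : Module.finrank K v = 1) (hκ : Module.finrank K κ = 3)
    (hvκ : v ≤ κ) (hpen : pencil v κ ⊆ H) :
    IsExternal κ := by
  have hvκ_lt : v < κ := hvκ.lt_of_ne (by rintro rfl; omega)
  intro s hs hs0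
  obtain ⟨X, hX, hsX⟩ := exists_mem_pencil_of_lt hv hvκ_lt hs
  exact hH.1.isExternal_of_mem (hpen hX) s hsX hs0
end

section
/- Let H be a pencilled hfd line set in PG(5,K) whose set of vertices is not contained in a single line, i.e. there is no 2-dimensional subspace of V containing every vertex of H. Then there exists a plane Δ (3-dimensional subspace of V) such that the vertices of H are exactly the points of Δ, Δ is the unique carrier plane of H, and H equals the set of all lines contained in Δ. -/
/-!
For two vertices `v, w` with carrier planes `κ, κ'`, take a tangent hyperplane `τ` through the
line `v ⊔ w`. A carrier plane never lies in a tangent hyperplane, since two lines of its pencil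
would then lie in `τ`; so `κ ⊓ τ` and `κ' ⊓ τ` are lines of the two pencils, both members of `H`
in `τ`, hence equal, and `w ≤ κ`. Thus every carrier plane contains every vertex, and as two
distinct planes meet in at most a line, non-collinear vertices leave a single carrier plane `Δ`.
Every member of `H` lies in `Δ`, and for each line `X ≤ Δ` the unique member of `H` in a tangent
hyperplane `τ ⊇ X` is `Δ ⊓ τ = X`.
-/

open Module Submodule

section LinearAlgebra

variable {K V : Type*} [Field K] [AddCommGroup V] [Module K V] [FiniteDimensional K V]

lemma exists_mem_notMem_of_finrank_lt {p q : Submodule K V} (h : finrank K p < finrank K q) :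
    ∃ x ∈ q, x ∉ p := by
  by_contra! hqp
  exact (finrank_mono (fun x hx ↦ hqp x hx)).not_gt h

lemma exists_le_finrank_eq {p : Submodule K V} {n : ℕ} (hp : finrank K p ≤ n)
    (hn : n ≤ finrank K V) : ∃ q : Submodule K V, p ≤ q ∧ finrank K q = n := by
  induction n with
  | zero => exact ⟨p, le_rfl, by omega⟩
  | succ n ih =>
    rcases hp.eq_or_lt with hp | hp
    · exact ⟨p, le_rfl, hp⟩
    obtain ⟨q, hpq, hq⟩ := ih (by omega) (by omega)
    obtain ⟨a, -, ha⟩ := exists_mem_notMem_of_finrank_lt (p := q) (q := ⊤)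
      (by rw [finrank_top]; omega)
    exact ⟨q ⊔ span K {a}, hpq.trans le_sup_left, by rw [finrank_sup_span_singleton ha, hq]⟩

lemma finrank_inf_lt_of_ne {p q : Submodule K V} (hpq : finrank K p = finrank K q)
    (hne : p ≠ q) : finrank K ↥(p ⊓ q) < finrank K p :=
  finrank_lt_finrank_of_lt <| inf_lt_left.2 fun hle ↦ hne (eq_of_le_of_finrank_eq hle hpq)

lemma finrank_inf_add_one_of_not_le {p τ : Submodule K V} (hτ : finrank K τ + 1 = finrank K V)
    (hpτ : ¬ p ≤ τ) : finrank K ↥(p ⊓ τ) + 1 = finrank K p := by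
  have hlt : finrank K τ < finrank K ↥(p ⊔ τ) :=
    finrank_lt_finrank_of_lt (right_lt_sup.2 hpτ)
  have := finrank_sup_add_finrank_inf_eq p τ
  have := (p ⊔ τ).finrank_le
  omega

end LinearAlgebra

section Klein

variable {K : Type*} [Field K]

def kleinBilin (K : Type*) [Field K] : LinearMap.BilinForm K (Fin 6 → K) :=
  LinearMap.mk₂ K
    (fun x y ↦ x 0 * y 1 + x 1 * y 0 + x 2 * y 3 + x 3 * y 2 + x 4 * y 5 + x 5 * y 4)
    (fun x x' y ↦ by simp only [Pi.add_apply]; ring)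
    (fun c x y ↦ by simp only [Pi.smul_apply, smul_eq_mul]; ring)
    (fun x y y' ↦ by simp only [Pi.add_apply]; ring)
    (fun c x y ↦ by simp only [Pi.smul_apply, smul_eq_mul]; ring)

lemma kleinBilin_apply (x y : Fin 6 → K) :
    kleinBilin K x y = x 0 * y 1 + x 1 * y 0 + x 2 * y 3 + x 3 * y 2 + x 4 * y 5 + x 5 * y 4 :=
  rfl

lemma kleinB_eq_kleinBilin (x y : Fin 6 → K) : kleinB x y = kleinBilin K x y := by
  simp only [kleinB, kleinQ, kleinBilin_apply, Pi.add_apply]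
  ring

lemma kleinBilin_isRefl : (kleinBilin K).IsRefl := fun x y h ↦ by
  rw [kleinBilin_apply] at h ⊢
  linear_combination h

lemma kleinBilin_nondegenerate : (kleinBilin K).Nondegenerate := by
  refine (LinearMap.IsRefl.nondegenerate_iff_separatingLeft (B := kleinBilin K)
    kleinBilin_isRefl).2 fun x hx ↦ ?_
  funext i
  fin_cases i
  · simpa [kleinBilin_apply] using hx (Pi.single 1 1)
  · simpa [kleinBilin_apply] using hx (Pi.single 0 1)
  · simpa [kleinBilin_apply] using hx (Pi.single 3 1)
  · simpa [kleinBilin_apply] using hx (Pi.single 2 1)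
  · simpa [kleinBilin_apply] using hx (Pi.single 5 1)
  · simpa [kleinBilin_apply] using hx (Pi.single 4 1)

lemma kleinPolar_eq_orthogonal (S : Submodule K (Fin 6 → K)) :
    kleinPolar S = (kleinBilin K).orthogonal S := by
  ext y
  simp only [kleinPolar, LinearMap.BilinForm.mem_orthogonal_iff, kleinB_eq_kleinBilin]
  rfl

lemma finrank_kleinPolar (S : Submodule K (Fin 6 → K)) :
    finrank K (kleinPolar S) = 6 - finrank K S := by
  rw [kleinPolar_eq_orthogonal, LinearMap.BilinForm.finrank_orthogonal kleinBilin_nondegenerate]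
  simp

lemma IsTangentHyperplane.finrank_eq {τ : Submodule K (Fin 6 → K)}
    (hτ : IsTangentHyperplane τ) : finrank K τ = 5 := by
  obtain ⟨x, hx, -, rfl⟩ := hτ
  rw [finrank_kleinPolar, finrank_span_singleton hx]

lemma exists_isTangentHyperplane_le (S : Submodule K (Fin 6 → K)) (hS : finrank K S ≤ 2) :
    ∃ τ, IsTangentHyperplane τ ∧ S ≤ τ := by
  let f : (Fin 6 → K) →ₗ[K] (Fin 3 → K) := LinearMap.funLeft K K ![1, 3, 5]
  have hW : finrank K (LinearMap.ker f) = 3 := by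
    have := LinearMap.finrank_range_add_finrank_ker f
    rw [LinearMap.range_eq_top.2 (LinearMap.funLeft_surjective_of_injective _ _ _
      (by decide)), finrank_top] at this
    simp only [finrank_fin_fun] at this
    omega
  -- the totally singular plane `x₁ = x₃ = x₅ = 0` meets the polar of `S`, of dimension `≥ 4`
  obtain ⟨z, hzS, hzW, hz⟩ : ∃ z ∈ kleinPolar S, z ∈ LinearMap.ker f ∧ z ≠ 0 := by
    by_contra! h
    have := finrank_add_finrank_le_of_disjoint (disjoint_def.2 h)
    rw [finrank_kleinPolar, hW] at this
    simp only [finrank_fin_fun] at this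
    omega
  have hz1 : z 1 = 0 := congrFun (LinearMap.mem_ker.1 hzW) 0
  have hz3 : z 3 = 0 := congrFun (LinearMap.mem_ker.1 hzW) 1
  have hz5 : z 5 = 0 := congrFun (LinearMap.mem_ker.1 hzW) 2
  refine ⟨kleinPolar (span K {z}), ⟨z, hz, by simp [kleinQ, hz1, hz3, hz5], rfl⟩, ?_⟩
  rw [kleinPolar_eq_orthogonal] at hzS ⊢
  exact (LinearMap.BilinForm.le_orthogonal_orthogonal kleinBilin_isRefl).trans
    (LinearMap.BilinForm.orthogonal_le (span_le.2 (Set.singleton_subset_iff.2 hzS)))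

lemma pencil_nontrivial {v κ : Submodule K (Fin 6 → K)} (hv : finrank K v = 1)
    (hκ : finrank K κ = 3) (hvκ : v ≤ κ) : (pencil v κ).Nontrivial := by
  obtain ⟨a, haκ, hav⟩ := exists_mem_notMem_of_finrank_lt (p := v) (q := κ) (by omega)
  have hX : finrank K ↥(v ⊔ span K {a}) = 2 := by rw [finrank_sup_span_singleton hav, hv]
  obtain ⟨b, hbκ, hbX⟩ :=
    exists_mem_notMem_of_finrank_lt (p := v ⊔ span K {a}) (q := κ) (by omega)
  have hbv : b ∉ v := fun h ↦ hbX (mem_sup_left h)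
  refine ⟨v ⊔ span K {a},
    ⟨hX, le_sup_left, sup_le hvκ (span_singleton_le_iff_mem _ _ |>.2 haκ)⟩,
    v ⊔ span K {b}, ⟨by rw [finrank_sup_span_singleton hbv, hv], le_sup_left,
      sup_le hvκ (span_singleton_le_iff_mem _ _ |>.2 hbκ)⟩, fun h ↦ hbX ?_⟩
  rw [h]
  exact mem_sup_right (mem_span_singleton_self b)

structure IsPencilIn (H : Set (Submodule K (Fin 6 → K))) (v κ : Submodule K (Fin 6 → K)) :
    Prop where
  finrank_vertex : finrank K v = 1
  finrank_carrier : finrank K κ = 3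
  vertex_le_carrier : v ≤ κ
  pencil_subset : pencil v κ ⊆ H

variable {H : Set (Submodule K (Fin 6 → K))}

lemma isVertex_iff {v : Submodule K (Fin 6 → K)} : IsVertex H v ↔ ∃ κ, IsPencilIn H v κ :=
  ⟨fun ⟨hv, κ, hκ, hvκ, hs⟩ ↦ ⟨κ, hv, hκ, hvκ, hs⟩, fun ⟨κ, hv, hκ, hvκ, hs⟩ ↦ ⟨hv, κ, hκ, hvκ, hs⟩⟩

lemma isCarrier_iff {κ : Submodule K (Fin 6 → K)} : IsCarrier H κ ↔ ∃ v, IsPencilIn H v κ :=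
  ⟨fun ⟨hκ, v, hv, hvκ, hs⟩ ↦ ⟨v, hv, hκ, hvκ, hs⟩, fun ⟨v, hv, hκ, hvκ, hs⟩ ↦ ⟨hκ, v, hv, hvκ, hs⟩⟩

lemma IsPencilledHfd.exists_isPencilIn (hH : IsPencilledHfd H) {G : Submodule K (Fin 6 → K)}
    (hG : G ∈ H) : ∃ v κ, IsPencilIn H v κ ∧ G ≤ κ := by
  obtain ⟨v, κ, hv, hκ, hvκ, hs, hGκ⟩ := hH.2 G hG
  exact ⟨v, κ, ⟨hv, hκ, hvκ, hs⟩, hGκ.2.2⟩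

namespace IsPencilIn

variable {v κ τ : Submodule K (Fin 6 → K)}

lemma not_le_of_isTangentHyperplane (hH : IsHfd H) (hp : IsPencilIn H v κ)
    (hτ : IsTangentHyperplane τ) : ¬ κ ≤ τ := fun hκτ ↦ by
  obtain ⟨X, hX, Y, hY, hXY⟩ :=
    pencil_nontrivial hp.finrank_vertex hp.finrank_carrier hp.vertex_le_carrier
  exact hXY <| (hH.2 τ hτ).unique ⟨hp.pencil_subset hX, hX.2.2.trans hκτ⟩
    ⟨hp.pencil_subset hY, hY.2.2.trans hκτ⟩

lemma finrank_inf_tangent (hH : IsHfd H) (hp : IsPencilIn H v κ)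
    (hτ : IsTangentHyperplane τ) : finrank K ↥(κ ⊓ τ) = 2 := by
  have := finrank_inf_add_one_of_not_le (by rw [hτ.finrank_eq]; simp)
    (hp.not_le_of_isTangentHyperplane hH hτ)
  rw [hp.finrank_carrier] at this
  omega

lemma inf_tangent_mem (hH : IsHfd H) (hp : IsPencilIn H v κ) (hτ : IsTangentHyperplane τ)
    (hvτ : v ≤ τ) : κ ⊓ τ ∈ H :=
  hp.pencil_subset ⟨hp.finrank_inf_tangent hH hτ, le_inf hp.vertex_le_carrier hvτ, inf_le_left⟩

lemma le_of_isVertex (hH : IsHfd H) (hp : IsPencilIn H v κ) {w : Submodule K (Fin 6 → K)}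
    (hw : IsVertex H w) : w ≤ κ := by
  obtain ⟨κ', hp'⟩ := isVertex_iff.1 hw
  obtain ⟨τ, hτ, hvwτ⟩ := exists_isTangentHyperplane_le (v ⊔ w)
    ((finrank_add_le_finrank_add_finrank v w).trans
      (by rw [hp.finrank_vertex, hp'.finrank_vertex]))
  have heq : κ ⊓ τ = κ' ⊓ τ := (hH.2 τ hτ).unique
    ⟨hp.inf_tangent_mem hH hτ (le_sup_left.trans hvwτ), inf_le_right⟩
    ⟨hp'.inf_tangent_mem hH hτ (le_sup_right.trans hvwτ), inf_le_right⟩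
  calc w ≤ κ' ⊓ τ := le_inf hp'.vertex_le_carrier (le_sup_right.trans hvwτ)
    _ = κ ⊓ τ := heq.symm
    _ ≤ κ := inf_le_left

lemma carrier_eq_of_noncollinear (hH : IsHfd H)
    (hnc : ¬ ∃ L : Submodule K (Fin 6 → K), finrank K L = 2 ∧ ∀ w, IsVertex H w → w ≤ L)
    {v' κ' : Submodule K (Fin 6 → K)} (hp : IsPencilIn H v κ) (hp' : IsPencilIn H v' κ') :
    κ = κ' := by
  by_contra hne
  have := finrank_inf_lt_of_ne (hp.finrank_carrier.trans hp'.finrank_carrier.symm) hne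
  rw [hp.finrank_carrier] at this
  obtain ⟨L, hle, hL⟩ := exists_le_finrank_eq (by omega : finrank K ↥(κ ⊓ κ') ≤ 2) (by simp)
  exact hnc ⟨L, hL, fun w hw ↦
    (le_inf (hp.le_of_isVertex hH hw) (hp'.le_of_isVertex hH hw)).trans hle⟩

end IsPencilIn

lemma IsPencilledHfd.eq_setOf_le_of_forall_isCarrier_eq (hH : IsPencilledHfd H)
    {v Δ : Submodule K (Fin 6 → K)} (hΔ : IsPencilIn H v Δ)
    (hcar : ∀ κ, IsCarrier H κ → κ = Δ) :
    H = {X : Submodule K (Fin 6 → K) | finrank K X = 2 ∧ X ≤ Δ} := by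
  have le_of_mem : ∀ G ∈ H, G ≤ Δ := fun G hG ↦ by
    obtain ⟨v', κ, hp, hGκ⟩ := hH.exists_isPencilIn hG
    exact hcar κ (isCarrier_iff.2 ⟨v', hp⟩) ▸ hGκ
  ext X
  refine ⟨fun hX ↦ ⟨(hH.1.1 X hX).1, le_of_mem X hX⟩, fun ⟨hX, hXΔ⟩ ↦ ?_⟩
  obtain ⟨τ, hτ, hXτ⟩ := exists_isTangentHyperplane_le X hX.le
  obtain ⟨G, ⟨hG, hGτ⟩, -⟩ := hH.1.2 τ hτ
  have hΔτ := hΔ.finrank_inf_tangent hH.1 hτ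
  have hXeq : X = Δ ⊓ τ := eq_of_le_of_finrank_eq (le_inf hXΔ hXτ) (hX.trans hΔτ.symm)
  have hGeq : G = Δ ⊓ τ :=
    eq_of_le_of_finrank_eq (le_inf (le_of_mem G hG) hGτ) ((hH.1.1 G hG).1.trans hΔτ.symm)
  rwa [hXeq, ← hGeq]

end Klein

/-- Main Theorem, part (b): non-collinear vertices.
If the vertices of a pencilled hfd line set `H` are not contained in a single line,
then there is a plane `Δ` whose points are exactly the vertices of `H`, `Δ` is the
unique carrier plane, and `H` is the set of all lines contained in `Δ`. -/
theorem noncollinear_vertices {K : Type*} [Field K]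
    (H : Set (Submodule K (Fin 6 → K))) (hH : IsPencilledHfd H)
    (hnc : ¬ ∃ L : Submodule K (Fin 6 → K), Module.finrank K L = 2 ∧
      ∀ v : Submodule K (Fin 6 → K), IsVertex H v → v ≤ L) :
    ∃ Δ : Submodule K (Fin 6 → K), Module.finrank K Δ = 3 ∧
      (∀ v : Submodule K (Fin 6 → K),
        IsVertex H v ↔ (Module.finrank K v = 1 ∧ v ≤ Δ)) ∧
      (∀ κ : Submodule K (Fin 6 → K), IsCarrier H κ ↔ κ = Δ) ∧
      H = {X : Submodule K (Fin 6 → K) | Module.finrank K X = 2 ∧ X ≤ Δ} := by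
  obtain ⟨v, Δ, hΔ⟩ : ∃ v Δ, IsPencilIn H v Δ := by
    by_contra! hnone
    obtain ⟨L, -, hL⟩ := exists_le_finrank_eq (p := (⊥ : Submodule K (Fin 6 → K))) (n := 2)
      (by simp) (by simp)
    exact hnc ⟨L, hL, fun w hw ↦ (isVertex_iff.1 hw).elim fun κ hp ↦ (hnone w κ hp).elim⟩
  have hcar : ∀ κ, IsCarrier H κ ↔ κ = Δ := fun κ ↦
    ⟨fun hκ ↦ (isCarrier_iff.1 hκ).elim fun _ hp ↦ hp.carrier_eq_of_noncollinear hH.1 hnc hΔ,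
      fun h ↦ isCarrier_iff.2 ⟨v, h ▸ hΔ⟩⟩
  have hHΔ := hH.eq_setOf_le_of_forall_isCarrier_eq hΔ fun κ ↦ (hcar κ).1
  refine ⟨Δ, hΔ.finrank_carrier, fun w ↦ ?_, hcar, hHΔ⟩
  rw [isVertex_iff]
  constructor
  · rintro ⟨κ, hp⟩
    exact ⟨hp.finrank_vertex, (hcar κ).1 (isCarrier_iff.2 ⟨w, hp⟩) ▸ hp.vertex_le_carrier⟩
  · rintro ⟨hw, hwΔ⟩
    exact ⟨Δ, hw, hΔ.finrank_carrier, hwΔ, fun X hX ↦ hHΔ ▸ ⟨hX.1, hX.2.2⟩⟩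
end

section
/- Let p be a point of PG(5,K) not on the Klein quadric H₅ (i.e. p = Ku for some u ∈ V with Q(u) ≠ 0) and let G be a line (2-dimensional subspace of V) with p ≤ G. Then there exists a nonzero x ∈ V with Q(x) = 0 such that p ≤ π₅(Kx) but G is not contained in π₅(Kx). -/
/-!
Suppose every point `x` of the quadric with `u ∈ x^⊥` also has `g ∈ x^⊥`; we show `g ∈ Ku`, so a
line `G` cannot lie in all these tangent hyperplanes. Write `σ` for the involution of the coordinates
pairing `x₀x₁`, `x₂x₃`, `x₄x₅`, so that `B(x, y) = ∑ xσᵢ yᵢ`. For `q ≠ σp` the vector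
`u_q e_σp - u_p e_σq` is singular and orthogonal to `u`, which forces `g_p u_q = g_q u_p`. Fixing
`u_k ≠ 0`, the difference `h = g - (g_k / u_k) u` is then supported on the coordinate `σk`, and a
singular vector orthogonal to `u` with `k`-th coordinate `1` kills it.
-/

section

variable {K : Type*} [Field K]

def kleinPartner : Fin 6 → Fin 6 := ![1, 0, 3, 2, 5, 4]

@[simp]
lemma kleinPartner_kleinPartner (i : Fin 6) : kleinPartner (kleinPartner i) = i := by
  fin_cases i <;> rfl

lemma kleinPartner_ne_self (i : Fin 6) : kleinPartner i ≠ i := by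
  fin_cases i <;> decide

lemma exists_ne_ne_kleinPartner (k : Fin 6) : ∃ r, r ≠ k ∧ r ≠ kleinPartner k := by
  fin_cases k <;> decide

lemma kleinQ_add (x y : Fin 6 → K) : kleinQ (x + y) = kleinQ x + kleinQ y + kleinB x y := by
  rw [kleinB]; ring

lemma kleinB_comm (x y : Fin 6 → K) : kleinB x y = kleinB y x := by
  rw [kleinB, kleinB, add_comm x y]; ring

lemma kleinB_add_left (x y z : Fin 6 → K) : kleinB (x + y) z = kleinB x z + kleinB y z := by
  simp only [kleinB, kleinQ, Pi.add_apply]; ring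

lemma kleinB_sub_smul_right (x y z : Fin 6 → K) (c : K) :
    kleinB x (y - c • z) = kleinB x y - c * kleinB x z := by
  simp only [kleinB, kleinQ, Pi.add_apply, Pi.sub_apply, Pi.smul_apply, smul_eq_mul]; ring

lemma kleinB_eq_sum (x y : Fin 6 → K) : kleinB x y = ∑ i, x (kleinPartner i) * y i := by
  simp only [kleinB, kleinQ, Pi.add_apply, Fin.sum_univ_six, kleinPartner]
  simp only [Matrix.cons_val]; ring

@[simp]
lemma kleinQ_single (i : Fin 6) (a : K) : kleinQ (Pi.single i a) = 0 := by
  fin_cases i <;> simp [kleinQ]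

@[simp]
lemma kleinB_single_left (i : Fin 6) (a : K) (y : Fin 6 → K) :
    kleinB (Pi.single i a) y = a * y (kleinPartner i) := by
  rw [kleinB_eq_sum, Finset.sum_eq_single (kleinPartner i)]
  · simp
  · intro j _ hj
    rw [Pi.single_eq_of_ne (fun h => hj (by rw [← h, kleinPartner_kleinPartner])), zero_mul]
  · simp

lemma kleinB_single_right (x : Fin 6 → K) (j : Fin 6) (a : K) :
    kleinB x (Pi.single j a) = x (kleinPartner j) * a := by
  rw [kleinB_comm, kleinB_single_left, mul_comm]

lemma mem_kleinPolar_span_singleton {x y : Fin 6 → K} :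
    y ∈ kleinPolar (Submodule.span K {x}) ↔ kleinB x y = 0 := by
  refine ⟨fun h => h x (Submodule.mem_span_singleton_self x), fun h s hs => ?_⟩
  obtain ⟨c, rfl⟩ := Submodule.mem_span_singleton.mp hs
  rw [kleinB_eq_sum] at h ⊢
  simp only [Pi.smul_apply, smul_eq_mul, mul_assoc, ← Finset.mul_sum, h, mul_zero]

variable {u g : Fin 6 → K}

lemma mul_eq_mul_of_forall_kleinB (hug : ∀ x, kleinQ x = 0 → kleinB x u = 0 → kleinB x g = 0)
    {p q : Fin 6} (hpq : q ≠ kleinPartner p) : g p * u q = g q * u p := by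
  have hp : p ≠ kleinPartner q := fun h => hpq (by rw [h, kleinPartner_kleinPartner])
  let x : Fin 6 → K := Pi.single (kleinPartner p) (u q) + Pi.single (kleinPartner q) (-u p)
  have hxQ : kleinQ x = 0 := by simp [x, kleinQ_add, Pi.single_eq_of_ne hp]
  have hxB : ∀ y, kleinB x y = u q * y p - u p * y q := fun y => by
    simp only [x, kleinB_add_left, kleinB_single_left, kleinPartner_kleinPartner]; ring
  have h := hug x hxQ (by rw [hxB]; ring)
  rw [hxB] at h
  linear_combination h

lemma exists_kleinQ_eq_zero_kleinB_eq_zero_apply_eq_one {k : Fin 6} (hk : u k ≠ 0) :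
    ∃ x, kleinQ x = 0 ∧ kleinB x u = 0 ∧ x k = 1 := by
  obtain ⟨r, hrk, hrk'⟩ := exists_ne_ne_kleinPartner k
  -- with `w u_k = u_σr - 1` the orthogonality condition becomes `u_σk + w u_r + s = 0`
  obtain ⟨w, hw⟩ : ∃ w, w * u k = u (kleinPartner r) - 1 := ⟨_, div_mul_cancel₀ _ hk⟩
  set s := -(u (kleinPartner k) + w * u r) with hs
  let x : Fin 6 → K := Pi.single k 1 + Pi.single (kleinPartner k) (-(s * w)) +
    (Pi.single r s + Pi.single (kleinPartner r) w)
  have hσkσr : kleinPartner k ≠ kleinPartner r := fun h => hrk (by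
    simpa using congrArg kleinPartner h.symm)
  have hkσr : k ≠ kleinPartner r := fun h => hrk' (by rw [h, kleinPartner_kleinPartner])
  refine ⟨x, ?_, ?_, ?_⟩
  · simp [x, kleinQ_add, kleinB_add_left, hrk', hrk.symm, hσkσr, hkσr]
  · simp only [x, kleinB_add_left, kleinB_single_left, kleinPartner_kleinPartner]
    linear_combination (-s) * hw + hs
  · simp [x, hrk.symm, hkσr, kleinPartner_ne_self]

lemma mem_span_singleton_of_forall_kleinB (hu : u ≠ 0)
    (hug : ∀ x, kleinQ x = 0 → kleinB x u = 0 → kleinB x g = 0) : g ∈ Submodule.span K {u} := by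
  obtain ⟨k, hk⟩ : ∃ k, u k ≠ 0 := Function.ne_iff.mp hu
  set h := g - (g k / u k) • u
  have huh : ∀ x, kleinQ x = 0 → kleinB x u = 0 → kleinB x h = 0 := fun x hxQ hxu => by
    rw [kleinB_sub_smul_right, hug x hxQ hxu, hxu, mul_zero, sub_zero]
  have hhk : h k = 0 := by simp [h, div_mul_cancel₀ _ hk]
  have h_single : h = Pi.single (kleinPartner k) (h (kleinPartner k)) := by
    funext q
    by_cases hq : q = kleinPartner k
    · simp [hq]
    · have := mul_eq_mul_of_forall_kleinB huh hq
      rw [hhk, zero_mul, eq_comm, mul_eq_zero] at this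
      simp [Pi.single_eq_of_ne hq, this.resolve_right hk]
  obtain ⟨x, hxQ, hxu, hxk⟩ := exists_kleinQ_eq_zero_kleinB_eq_zero_apply_eq_one hk
  have hσk : h (kleinPartner k) = 0 := by
    have := huh x hxQ hxu
    rwa [h_single, kleinB_single_right, kleinPartner_kleinPartner, hxk, one_mul] at this
  have h_zero : h = 0 := by rw [h_single, hσk, Pi.single_zero]
  exact Submodule.mem_span_singleton.mpr ⟨g k / u k, (sub_eq_zero.mp h_zero).symm⟩

end

theorem exists_tangent_through_point_not_line_general {K : Type*} [Field K]
    (u : Fin 6 → K) (hu : u ≠ 0)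
    (G : Submodule K (Fin 6 → K)) (hG : Module.finrank K G = 2) :
    ∃ x : Fin 6 → K, x ≠ 0 ∧ kleinQ x = 0 ∧
      Submodule.span K {u} ≤ kleinPolar (Submodule.span K {x}) ∧
      ¬ G ≤ kleinPolar (Submodule.span K {x}) := by
  by_contra! hcon
  have hGu : G ≤ Submodule.span K {u} := fun g hg => by
    refine mem_span_singleton_of_forall_kleinB hu fun x hxQ hxu => ?_
    rcases eq_or_ne x 0 with rfl | hx
    · simp [kleinB_eq_sum]
    have hux : Submodule.span K {u} ≤ kleinPolar (Submodule.span K {x}) := by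
      rwa [Submodule.span_singleton_le_iff_mem, mem_kleinPolar_span_singleton]
    exact mem_kleinPolar_span_singleton.mp (hcon x hx hxQ hux hg)
  have := Submodule.finrank_mono hGu
  rw [hG, finrank_span_singleton hu] at this
  omega

/-- Lemma 4.4.
If `p = Ku` is a point off the Klein quadric lying on a line `G`, then there is a
point `x` of the Klein quadric whose tangent hyperplane contains `p` but not `G`. -/
theorem exists_tangent_through_point_not_line {K : Type*} [Field K]
    (u : Fin 6 → K) (hu : u ≠ 0) (hQu : kleinQ u ≠ 0)
    (G : Submodule K (Fin 6 → K)) (hG : Module.finrank K G = 2)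
    (hpG : Submodule.span K {u} ≤ G) :
    ∃ x : Fin 6 → K, x ≠ 0 ∧ kleinQ x = 0 ∧
      Submodule.span K {u} ≤ kleinPolar (Submodule.span K {x}) ∧
      ¬ G ≤ kleinPolar (Submodule.span K {x}) :=
  exists_tangent_through_point_not_line_general u hu G hG
end
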